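/- arXiv:2503.01423 — 12 statements merged into one kernel-verified Lean document; each statement's English description precedes it below -/
import Mathlib

section
/- Let G be an r-regular graph on n vertices, where r is odd. If Γ is an Abelian group of order n with exactly one involution, then G has no Γ-distance magic labeling. -/
open Finset

noncomputable def vertexWeight {V Γ : Type*} [Fintype V] [AddCommMonoid Γ]
    (G : SimpleGraph V) (ℓ : V → Γ) (x : V) : Γ := by
  classical exact ∑ y ∈ Finset.univ.filter (fun v => G.Adj x v), ℓ y

/-- `ℓ` is a distance magic labeling of `G` with magic constant `μ`. -/
def IsDistMagic {V Γ : Type*} [Fintype V] [AddCommMonoid Γ]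
    (G : SimpleGraph V) (ℓ : V → Γ) (μ : Γ) : Prop :=
  Function.Bijective ℓ ∧ ∀ x, vertexWeight G ℓ x = μ

noncomputable def degOf {V : Type*} [Fintype V] (G : SimpleGraph V) (v : V) : ℕ := by
  classical exact (Finset.univ.filter (fun u => G.Adj v u)).card

/-- The generalized Petersen graph `GP(n,k)` on vertex set `ZMod n ⊕ ZMod n`:
`Sum.inl i` is the outer vertex `x_i`, `Sum.inr i` the inner vertex `y_i`. -/
def GP (n k : ℕ) : SimpleGraph (ZMod n ⊕ ZMod n) :=
  SimpleGraph.fromRel (fun a b =>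
    match a, b with
    | Sum.inl i, Sum.inl j => j = i + 1
    | Sum.inr i, Sum.inr j => j = i + (k : ZMod n)
    | Sum.inl i, Sum.inr j => i = j
    | _, _ => False)

/-- A balanced zero-neighborhood labeling of a graph `G` on `2n` vertices. -/
noncomputable def IsBZN {V : Type*} [Fintype V] (G : SimpleGraph V) (n : ℕ)
    (ℓ : V → ZMod 2) : Prop := by
  classical exact
    (Finset.univ.filter (fun v => ℓ v = 0)).card = n ∧
    (Finset.univ.filter (fun v => ℓ v = 1)).card = n ∧
    ∀ v, vertexWeight G ℓ v = 0

theorem stmt0 {V Γ : Type*} [Fintype V] [AddCommGroup Γ] [Fintype Γ]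
    (G : SimpleGraph V) (r : ℕ) (hreg : ∀ v, degOf G v = r) (hodd : Odd r)
    (hcard : Fintype.card Γ = Fintype.card V)
    (hinv : ∃! ι : Γ, ι ≠ 0 ∧ ι + ι = 0) :
    ¬ ∃ (ℓ : V → Γ) (μ : Γ), IsDistMagic G ℓ μ := by
  classical
  rintro ⟨ℓ, μ, hbij, hmag⟩
  obtain ⟨ι, ⟨hι0, hι2⟩, huniq⟩ := hinv
  -- Sum of all group elements equals ι
  have hSι : (∑ g : Γ, g) = ι := by
    have : (∑ g : Γ, g) = ∑ g : Γ, id g := rfl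
    rw [this, ← Finset.sum_filter_add_sum_filter_not Finset.univ (fun g : Γ => g + g = 0) id]
    have h1 : ∑ g ∈ Finset.univ.filter (fun g : Γ => g + g = 0), id g = ι := by
      have hset : Finset.univ.filter (fun g : Γ => g + g = 0) = {0, ι} := by
        ext g
        simp only [Finset.mem_filter, Finset.mem_univ, true_and, Finset.mem_insert,
          Finset.mem_singleton]
        constructor
        · intro hg
          by_cases h0 : g = 0
          · exact Or.inl h0
          · exact Or.inr (huniq g ⟨h0, hg⟩)
        · rintro (rfl | rfl)
          · simp
          · exact hι2
      rw [hset, Finset.sum_pair (Ne.symm hι0)]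
      simp
    have h2 : ∑ g ∈ Finset.univ.filter (fun g : Γ => ¬ g + g = 0), id g = 0 := by
      refine Finset.sum_involution (f := id) (fun g _ => -g) (fun g _ => add_neg_cancel g)
        ?_ ?_ (fun g _ => neg_neg g)
      · intro g hg _ h
        change -g = g at h
        refine (Finset.mem_filter.1 hg).2 ?_
        calc g + g = g + -g := by rw [h]
          _ = 0 := add_neg_cancel g
      · intro g hg
        refine Finset.mem_filter.2 ⟨Finset.mem_univ _, ?_⟩
        intro h
        refine (Finset.mem_filter.1 hg).2 ?_
        have h2 : -g + -g = 0 := h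
        have := congrArg Neg.neg h2
        simpa using this
    rw [h1, h2, add_zero]
  -- sum of weights
  have hswap : ∑ x : V, vertexWeight G ℓ x = r • ∑ y : V, ℓ y := by
    unfold vertexWeight
    simp_rw [Finset.sum_filter]
    rw [Finset.sum_comm, Finset.smul_sum]
    refine Finset.sum_congr rfl fun y _ => ?_
    rw [← Finset.sum_filter, Finset.sum_const]
    congr 1
    rw [← hreg y]
    unfold degOf
    congr 1
    ext x
    simp [G.adj_comm]
  have hsumℓ : ∑ y : V, ℓ y = ∑ g : Γ, g :=
    Fintype.sum_bijective ℓ hbij ℓ id (fun _ => rfl)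
  have hμ : ∑ x : V, vertexWeight G ℓ x = Fintype.card V • μ := by
    simp [hmag]
  have hzero : (Fintype.card V : ℕ) • μ = 0 := by
    rw [← hcard]
    exact card_nsmul_eq_zero
  have hrι : r • ι = (0 : Γ) := by
    rw [← hzero, ← hμ, hswap, hsumℓ, hSι]
  obtain ⟨m, hm⟩ := hodd
  apply hι0
  calc ι = (2 * m) • ι + ι := by
        rw [mul_comm, mul_smul]
        have : (2 : ℕ) • ι = 0 := by rw [two_nsmul, hι2]
        rw [this, smul_zero, zero_add]
    _ = r • ι := by rw [hm, add_smul, one_smul]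
    _ = 0 := hrι
end

section
/- Let G be an r-regular graph on n vertices, where r is odd and n ≡ 2 (mod 4). Then G has no Γ-distance magic labeling for any Abelian group Γ of order n. -/
open Finset

theorem sum_univ_ne_zero {Γ : Type*} [AddCommGroup Γ] [Fintype Γ]
    (hmod4 : Fintype.card Γ % 4 = 2) : (∑ g : Γ, g) ≠ 0 := by
  classical
  haveI : Fact (Nat.Prime 2) := ⟨Nat.prime_two⟩
  have h2 : 2 ∣ Fintype.card Γ := by omega
  obtain ⟨ι, hι⟩ := exists_prime_addOrderOf_dvd_card 2 h2
  have hι0 : ι ≠ 0 := by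
    intro h; rw [h, addOrderOf_zero] at hι; norm_num at hι
  have hι2 : ι + ι = 0 := by
    have := addOrderOf_nsmul_eq_zero ι; rw [hι, two_nsmul] at this; exact this
  set H : AddSubgroup Γ :=
    { carrier := {g | g + g = 0}
      zero_mem' := by simp
      add_mem' := fun {a b} ha hb => by
        simp only [Set.mem_setOf_eq] at *
        calc a + b + (a + b) = (a + a) + (b + b) := by abel
        _ = 0 := by rw [ha, hb, add_zero]
      neg_mem' := fun {a} ha => by
        simp only [Set.mem_setOf_eq] at *
        rw [← neg_add, ha, neg_zero] } with hH
  have hmemH : ∀ g : Γ, g ∈ H ↔ g + g = 0 := fun g => Iff.rfl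
  have hP : IsPGroup 2 (Multiplicative H) := fun g => ⟨1, by
    have h := (Multiplicative.toAdd g).2
    rw [pow_one, sq]
    exact Subtype.ext h⟩
  obtain ⟨k, hk⟩ := IsPGroup.iff_card.mp hP
  have hkH : Nat.card ↥H = 2 ^ k := hk
  have hdvd : (2:ℕ) ^ k ∣ Fintype.card Γ := by
    rw [← hkH, ← Nat.card_eq_fintype_card]
    exact AddSubgroup.card_addSubgroup_dvd_card H
  have hk1 : k = 1 := by
    have hge : 2 ≤ Nat.card ↥H := by
      have : ({0, ι} : Finset Γ) ⊆ (univ.filter (fun g => g ∈ H)) := by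
        intro g hg
        simp only [mem_insert, mem_singleton] at hg
        rcases hg with rfl | rfl <;> simp [hmemH, hι2]
      have hc2 : ({0, ι} : Finset Γ).card = 2 := by
        rw [Finset.card_pair (Ne.symm hι0)]
      calc 2 = ({0, ι} : Finset Γ).card := hc2.symm
      _ ≤ (univ.filter (fun g => g ∈ H)).card := Finset.card_le_card this
      _ = Nat.card ↥H := by
          rw [Nat.card_eq_fintype_card, Fintype.card_subtype]
    have hkge1 : 1 ≤ k := by
      by_contra hc
      push_neg at hc
      interval_cases k
      rw [Nat.card_eq_fintype_card] at hkH
      simp [hkH] at hge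
    have hklt2 : k < 2 := by
      by_contra hc
      push_neg at hc
      have h4 : (4:ℕ) ∣ Fintype.card Γ := by
        have : (2:ℕ) ^ 2 ∣ 2 ^ k := pow_dvd_pow 2 hc
        exact dvd_trans (by norm_num at this ⊢; exact this) hdvd
      omega
    omega
  -- H as a finset has exactly two elements 0 and ι
  have hTcard : (univ.filter (fun g : Γ => g + g = 0)).card = 2 := by
    have : (univ.filter (fun g : Γ => g + g = 0)) = (univ.filter (fun g => g ∈ H)) := by
      apply Finset.filter_congr; intro g _; simp [hmemH]
    rw [this, ← Fintype.card_subtype, ← Nat.card_eq_fintype_card, hkH, hk1, pow_one]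
  have hTeq : (univ.filter (fun g : Γ => g + g = 0)) = {0, ι} := by
    symm
    apply Finset.eq_of_subset_of_card_le
    · intro g hg
      simp only [mem_insert, mem_singleton] at hg
      rcases hg with rfl | rfl <;> simp [hι2]
    · rw [hTcard, Finset.card_pair (Ne.symm hι0)]
  -- split the sum
  have hsplit : (∑ g : Γ, g) = ∑ g ∈ univ.filter (fun g : Γ => g + g = 0), g
      + ∑ g ∈ univ.filter (fun g : Γ => ¬ (g + g = 0)), g :=
    (Finset.sum_filter_add_sum_filter_not univ _ _).symm
  have hzero : ∑ g ∈ univ.filter (fun g : Γ => ¬ (g + g = 0)), g = 0 := by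
    refine Finset.sum_involution (fun a _ => -a) ?_ ?_ ?_ ?_
    · intro a _; exact add_neg_cancel a
    · intro a ha _
      simp only [mem_filter, mem_univ, true_and] at ha
      intro hc
      apply ha
      calc a + a = -a + a := by rw [hc]
      _ = 0 := neg_add_cancel a
    · intro a ha
      simp only [mem_filter, mem_univ, true_and] at ha ⊢
      intro hc
      apply ha
      have h2 := congrArg Neg.neg hc
      simpa using h2
    · intro a _; simp
  rw [hsplit, hzero, add_zero, hTeq, Finset.sum_pair (Ne.symm hι0), zero_add]
  exact hι0

theorem stmt1 {V Γ : Type*} [Fintype V] [AddCommGroup Γ] [Fintype Γ]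
    (G : SimpleGraph V) (r : ℕ) (hreg : ∀ v, degOf G v = r) (hodd : Odd r)
    (hmod : Fintype.card V % 4 = 2)
    (hcard : Fintype.card Γ = Fintype.card V) :
    ¬ ∃ (ℓ : V → Γ) (μ : Γ), IsDistMagic G ℓ μ := by
  classical
  rintro ⟨ℓ, μ, hbij, hmagic⟩
  set s : Γ := ∑ g : Γ, g with hs
  -- double counting
  have h1 : ∑ x : V, vertexWeight G ℓ x = (Fintype.card V) • μ := by
    simp [hmagic, Finset.sum_const, Finset.card_univ]
  have hℓsum : ∑ y : V, ℓ y = s :=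
    Fintype.sum_bijective ℓ hbij _ _ (fun x => rfl)
  have h2 : ∑ x : V, vertexWeight G ℓ x = r • s := by
    unfold vertexWeight
    calc ∑ x : V, ∑ y ∈ univ.filter (fun v => G.Adj x v), ℓ y
        = ∑ x : V, ∑ y : V, if G.Adj x y then ℓ y else 0 := by
          refine Finset.sum_congr rfl fun x _ => (Finset.sum_filter _ _)
      _ = ∑ y : V, ∑ x : V, if G.Adj x y then ℓ y else 0 := Finset.sum_comm
      _ = ∑ y : V, ∑ x ∈ univ.filter (fun x => G.Adj x y), ℓ y := by
          refine Finset.sum_congr rfl fun y _ => (Finset.sum_filter _ _).symm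
      _ = ∑ y : V, (univ.filter (fun x => G.Adj x y)).card • ℓ y := by
          refine Finset.sum_congr rfl fun y _ => Finset.sum_const _
      _ = ∑ y : V, r • ℓ y := by
          refine Finset.sum_congr rfl fun y _ => ?_
          congr 1
          rw [← hreg y]
          unfold degOf
          congr 1
          apply Finset.filter_congr
          intro x _
          exact ⟨fun h => h.symm, fun h => h.symm⟩
      _ = r • ∑ y : V, ℓ y := (Finset.smul_sum).symm
      _ = r • s := by rw [hℓsum]
  -- card V • μ = 0
  have hμ0 : (Fintype.card V) • μ = 0 := by
    rw [← hcard]; exact card_nsmul_eq_zero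
  -- hence r • s = 0
  have hrs : r • s = 0 := by rw [← h2, h1, hμ0]
  -- 2 • s = 0
  have h2s : s + s = 0 := by
    have hneg : ∑ g : Γ, -g = s :=
      Fintype.sum_bijective (Equiv.neg Γ) (Equiv.neg Γ).bijective _ _ (fun x => rfl)
    calc s + s = s + ∑ g : Γ, -g := by rw [hneg]
      _ = ∑ g : Γ, (g + -g) := by rw [hs, ← Finset.sum_add_distrib]
      _ = 0 := by simp
  -- odd r gives s = 0
  have hs0 : s = 0 := by
    obtain ⟨m, rfl⟩ := hodd
    calc s = m • (s + s) + s := by rw [h2s]; simp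
      _ = (2 * m + 1) • s := by
          rw [smul_add, two_mul, add_smul, add_smul, one_smul]
      _ = 0 := hrs
  have hmodΓ : Fintype.card Γ % 4 = 2 := by rw [hcard]; exact hmod
  exact sum_univ_ne_zero hmodΓ hs0
end

section
/- Let G be an r-regular graph on n vertices, where r is odd, and let Γ = A ⊕ B with gcd(|A|, r) = 1 and |A|·|B| = n. Then there exists a Γ-distance magic labeling of G with magic constant (0, μ₂) for some μ₂ ∈ B if and only if for every μ₁ ∈ A there exists a Γ-distance magic labeling of G with magic constant (μ₁, μ₂). -/
open Finset

theorem stmt2 {V A B : Type*} [Fintype V] [AddCommGroup A] [Fintype A]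
    [AddCommGroup B] [Fintype B]
    (G : SimpleGraph V) (r : ℕ) (hreg : ∀ v, degOf G v = r) (hodd : Odd r)
    (hgcd : Nat.gcd (Fintype.card A) r = 1)
    (hcard : Fintype.card A * Fintype.card B = Fintype.card V) (μ₂ : B) :
    (∃ ℓ : V → A × B, IsDistMagic G ℓ (0, μ₂)) ↔
      (∀ μ₁ : A, ∃ ℓ : V → A × B, IsDistMagic G ℓ (μ₁, μ₂)) := by
  classical
  constructor
  · rintro ⟨ℓ, hbij, hmag⟩ μ₁
    -- r • · is bijective on A
    have hinj : Function.Injective (fun x : A => r • x) := by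
      intro x y hxy
      simp only at hxy
      have h0 : r • (x - y) = 0 := by
        rw [smul_sub, hxy, sub_self]
      have hdvd : addOrderOf (x - y) ∣ r := addOrderOf_dvd_of_nsmul_eq_zero h0
      have hdvd2 : addOrderOf (x - y) ∣ Fintype.card A := addOrderOf_dvd_card
      have : addOrderOf (x - y) ∣ 1 := hgcd ▸ Nat.dvd_gcd hdvd2 hdvd
      have hxm : x - y = 0 := AddMonoid.addOrderOf_eq_one_iff.mp (Nat.dvd_one.mp this)
      exact sub_eq_zero.mp hxm
    have hsurj : Function.Surjective (fun x : A => r • x) :=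
      Finite.surjective_of_injective hinj
    obtain ⟨a, ha⟩ := hsurj μ₁
    refine ⟨fun v => ℓ v + (a, 0), ?_, ?_⟩
    · have : (fun v => ℓ v + (a, 0)) = (fun z => z + (a, 0)) ∘ ℓ := rfl
      rw [this]
      exact (Equiv.addRight ((a : A), (0 : B))).bijective.comp hbij
    · intro x
      have hw : vertexWeight G (fun v => ℓ v + (a, 0)) x
          = vertexWeight G ℓ x + (degOf G x) • ((a : A), (0 : B)) := by
        simp only [vertexWeight, degOf, Finset.sum_add_distrib, Finset.sum_const]
      rw [hw, hmag, hreg]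
      have : r • ((a : A), (0 : B)) = ((μ₁ : A), (0 : B)) := by
        simp [Prod.smul_def, ha]
      rw [this, Prod.mk_add_mk, zero_add, add_zero]
  · intro h
    exact h 0
end

section
/- Let G be a cubic (3-regular) graph of order 2^m for some positive integer m. Then there does not exist a (Z₂)^m-distance magic labeling of G. -/
open Finset

theorem stmt3 {V : Type*} [Fintype V] (G : SimpleGraph V) (m : ℕ) (hm : 0 < m)
    (hreg : ∀ v, degOf G v = 3) (hcard : Fintype.card V = 2 ^ m) :
    ¬ ∃ (ℓ : V → (Fin m → ZMod 2)) (μ : Fin m → ZMod 2), IsDistMagic G ℓ μ := by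
  classical
  rintro ⟨ℓ, μ, hbij, hmagic⟩
  obtain ⟨u, hu⟩ := hbij.2 μ
  have hne : (Finset.univ.filter (fun w => G.Adj u w)).Nonempty := by
    rw [← Finset.card_pos]
    have := hreg u
    unfold degOf at this
    omega
  obtain ⟨x, hx⟩ := hne
  simp only [Finset.mem_filter, Finset.mem_univ, true_and] at hx
  set S := Finset.univ.filter (fun w => G.Adj x w) with hS
  have hcardS : S.card = 3 := hreg x
  have huS : u ∈ S := by
    simp only [hS, Finset.mem_filter, Finset.mem_univ, true_and]
    exact hx.symm
  have hsum : ∑ y ∈ S, ℓ y = μ := hmagic x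
  have hsum2 : ℓ u + ∑ y ∈ S.erase u, ℓ y = μ := by
    rwa [Finset.add_sum_erase S ℓ huS]
  have hrest : ∑ y ∈ S.erase u, ℓ y = 0 := by
    rw [hu] at hsum2
    have := congrArg (fun z => -μ + z) hsum2
    simpa [add_assoc] using this
  have hcard2 : (S.erase u).card = 2 := by
    rw [Finset.card_erase_of_mem huS, hcardS]
  obtain ⟨b, c, hbc, hbceq⟩ := Finset.card_eq_two.mp hcard2
  rw [hbceq, Finset.sum_pair hbc] at hrest
  have key : ∀ a b : ZMod 2, a + b = 0 → a = b := by decide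
  have hlbc : ℓ b = ℓ c := funext fun i => key _ _ (congrFun hrest i)
  exact hbc (hbij.1 hlbc)
end

section
/- Let G be a connected cubic graph on n vertices and Γ an Abelian group of order n. If G has a Γ-distance magic labeling, then G contains no 4-cycle. -/
open Finset

lemma sum_univ_ne_zero_of_card_six {Γ : Type*} [AddCommGroup Γ] [Fintype Γ]
    (h6 : Fintype.card Γ = 6) : ∑ g : Γ, g ≠ 0 := by
  classical
  obtain ⟨t, ht⟩ := exists_prime_addOrderOf_dvd_card (G := Γ) 2 (by rw [h6]; norm_num)
  obtain ⟨s, hs⟩ := exists_prime_addOrderOf_dvd_card (G := Γ) 3 (by rw [h6]; norm_num)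
  have hcyc : IsAddCyclic Γ := by
    apply isAddCyclic_of_addOrderOf_eq_card (t + s)
    rw [AddCommute.addOrderOf_add_eq_mul_addOrderOf_of_coprime (AddCommute.all t s)
      (by rw [ht, hs]; norm_num), ht, hs, Nat.card_eq_fintype_card, h6]
  have e := zmodAddCyclicAddEquiv hcyc
  rw [Nat.card_eq_fintype_card, h6] at e
  have : ∑ g : Γ, g = e (∑ i : ZMod 6, i) := by
    rw [map_sum]
    exact (Fintype.sum_bijective e e.bijective _ _ (fun x => rfl)).symm
  rw [this]
  have h3 : (∑ i : ZMod 6, i) = 3 := by decide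
  rw [h3]
  intro h
  have := e.injective (h.trans (map_zero e).symm)
  exact absurd this (by decide)

lemma third_neighbor {V : Type*} [Fintype V] (G : SimpleGraph V) {v p q : V}
    (h3 : degOf G v = 3) (hp : G.Adj v p) (hq : G.Adj v q) (hpq : p ≠ q) :
    ∃ r, G.Adj v r ∧ r ≠ p ∧ r ≠ q ∧ ∀ u, G.Adj v u → u = p ∨ u = q ∨ u = r := by
  classical
  unfold degOf at h3
  set s := Finset.univ.filter (fun u => G.Adj v u) with hs
  have hps : p ∈ s := by simp [hs, hp]
  have hqs : q ∈ s := by simp [hs, hq]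
  have hsub : ({p, q} : Finset V) ⊆ s := by
    intro x hx; simp only [mem_insert, mem_singleton] at hx
    rcases hx with rfl | rfl <;> assumption
  have hcard : (s \ {p, q}).card = 1 := by
    rw [card_sdiff_of_subset hsub, h3, card_insert_of_notMem (by simpa), card_singleton]
  obtain ⟨r, hr⟩ := Finset.card_eq_one.mp hcard
  have hrmem : r ∈ s \ ({p, q} : Finset V) := hr ▸ mem_singleton_self r
  rw [mem_sdiff, mem_insert, mem_singleton] at hrmem
  push_neg at hrmem
  obtain ⟨hrs, hrp, hrq⟩ := hrmem
  refine ⟨r, by simpa [hs] using hrs, hrp, hrq, fun u hu => ?_⟩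
  by_cases h1 : u = p; · exact Or.inl h1
  by_cases h2 : u = q; · exact Or.inr (Or.inl h2)
  right; right
  have : u ∈ s \ ({p, q} : Finset V) := by
    rw [mem_sdiff, mem_insert, mem_singleton]
    exact ⟨by simp [hs, hu], by tauto⟩
  rw [hr, mem_singleton] at this; exact this

lemma weight_eq {V Γ : Type*} [Fintype V] [AddCommMonoid Γ] (G : SimpleGraph V)
    (ℓ : V → Γ) {v p q r : V} (hp : G.Adj v p) (hq : G.Adj v q) (hr : G.Adj v r)
    (hpq : p ≠ q) (hpr : p ≠ r) (hqr : q ≠ r)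
    (hall : ∀ u, G.Adj v u → u = p ∨ u = q ∨ u = r) :
    vertexWeight G ℓ v = ℓ p + ℓ q + ℓ r := by
  classical
  unfold vertexWeight
  have : (Finset.univ.filter (fun u => G.Adj v u)) = {p, q, r} := by
    ext u
    simp only [mem_filter, mem_univ, true_and, mem_insert, mem_singleton]
    constructor
    · exact hall u
    · rintro (rfl | rfl | rfl) <;> assumption
  rw [show (Finset.univ.filter (fun u => G.Adj v u) : Finset V) = _ from this]
  rw [sum_insert (by simp [hpq, hpr]), sum_insert (by simp [hqr]), sum_singleton, add_assoc]

lemma handshake {V Γ : Type*} [Fintype V] [AddCommMonoid Γ] (G : SimpleGraph V)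
    (ℓ : V → Γ) : ∑ v, vertexWeight G ℓ v = ∑ u, degOf G u • ℓ u := by
  classical
  unfold vertexWeight degOf
  calc ∑ v, ∑ y ∈ Finset.univ.filter (fun u => G.Adj v u), ℓ y
      = ∑ v, ∑ y : V, if G.Adj v y then ℓ y else 0 := by
        refine Finset.sum_congr rfl fun v _ => ?_
        rw [Finset.sum_filter]
    _ = ∑ y : V, ∑ v : V, if G.Adj v y then ℓ y else 0 := Finset.sum_comm
    _ = ∑ y : V, (Finset.univ.filter (fun v => G.Adj y v)).card • ℓ y := by
        refine Finset.sum_congr rfl fun y _ => ?_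
        rw [← Finset.sum_filter, Finset.sum_const]
        congr 1
        apply Finset.card_bij (fun a _ => a) <;> simp [G.adj_comm]

lemma sum_gamma_eq_zero {V Γ : Type*} [Fintype V] [AddCommGroup Γ] [Fintype Γ]
    (G : SimpleGraph V) (hreg : ∀ v, degOf G v = 3)
    (hcard : Fintype.card Γ = Fintype.card V)
    (ℓ : V → Γ) (μ : Γ) (hbij : Function.Bijective ℓ)
    (hμ : ∀ x, vertexWeight G ℓ x = μ) : ∑ g : Γ, g = 0 := by
  classical
  have h1 : ∑ v : V, vertexWeight G ℓ v = Fintype.card V • μ := by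
    rw [Finset.sum_congr rfl fun v _ => hμ v, Finset.sum_const, Finset.card_univ]
  have h2 : ∑ v : V, vertexWeight G ℓ v = 3 • ∑ g : Γ, g := by
    rw [handshake, Finset.sum_congr rfl fun u _ => by rw [hreg u]]
    rw [← Finset.smul_sum]
    congr 1
    exact (Fintype.sum_bijective ℓ hbij _ _ (fun x => rfl))
  have hcardμ : Fintype.card V • μ = 0 := by
    rw [← hcard]
    have := card_nsmul_eq_zero (G := Γ) (x := μ)
    exact this
  have h3 : (3 : ℕ) • (∑ g : Γ, g) = 0 := by rw [← h2, h1, hcardμ]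
  have h4 : (2 : ℕ) • (∑ g : Γ, g) = 0 := by
    have : ∑ g : Γ, g = ∑ g : Γ, -g :=
      (Fintype.sum_bijective (fun g : Γ => -g) (neg_involutive).bijective
        (fun g => g) (fun g => -g) (fun x => (neg_neg x).symm))
    rw [two_nsmul]
    nth_rewrite 2 [this]
    rw [← Finset.sum_add_distrib]
    simp
  have := sub_eq_zero.mpr (h3.trans h4.symm)
  rw [show (3:ℕ) • (∑ g : Γ, g) - (2:ℕ) • (∑ g : Γ, g) = ∑ g : Γ, g by
    rw [succ_nsmul]; abel] at this
  exact this

theorem stmt4 {V Γ : Type*} [Fintype V] [AddCommGroup Γ] [Fintype Γ]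
    (G : SimpleGraph V) (hconn : G.Connected) (hreg : ∀ v, degOf G v = 3)
    (hcard : Fintype.card Γ = Fintype.card V)
    (hmagic : ∃ (ℓ : V → Γ) (μ : Γ), IsDistMagic G ℓ μ) :
    ¬ ∃ a b c d : V, a ≠ b ∧ a ≠ c ∧ a ≠ d ∧ b ≠ c ∧ b ≠ d ∧ c ≠ d ∧
      G.Adj a b ∧ G.Adj b c ∧ G.Adj c d ∧ G.Adj d a := by
  classical
  rintro ⟨a, b, c, d, hab', hac', had', hbc', hbd', hcd', hab, hbc, hcd, hda⟩
  obtain ⟨ℓ, μ, hbij, hμ⟩ := hmagic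
  -- third neighbor x of b (besides a and c)
  obtain ⟨x, hbx, hxa, hxc, allb⟩ := third_neighbor G (hreg b) hab.symm hbc hac'
  -- third neighbor y of d (besides a and c)
  obtain ⟨y, hdy, hya, hyc, alld⟩ := third_neighbor G (hreg d) hda hcd.symm hac'
  -- x = y
  have hwb : vertexWeight G ℓ b = ℓ a + ℓ c + ℓ x :=
    weight_eq G ℓ hab.symm hbc hbx hac' (Ne.symm hxa) (Ne.symm hxc) allb
  have hwd : vertexWeight G ℓ d = ℓ a + ℓ c + ℓ y :=
    weight_eq G ℓ hda hcd.symm hdy hac' (Ne.symm hya) (Ne.symm hyc)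
      (fun u hu => by rcases alld u hu with h | h | h <;> tauto)
  have hxy : x = y := hbij.1 (add_left_cancel ((hwb.symm.trans (hμ b)).trans
    ((hμ d).symm.trans hwd)))
  subst y
  have hxb : x ≠ b := (G.ne_of_adj hbx).symm
  have hxd : x ≠ d := (G.ne_of_adj hdy).symm
  -- third neighbor z of a (besides b and d)
  obtain ⟨z, haz, hzb, hzd, alla⟩ := third_neighbor G (hreg a) hab hda.symm hbd'
  -- third neighbor w of c (besides b and d)
  obtain ⟨w, hcw, hwb2, hwd2, allc⟩ := third_neighbor G (hreg c) hbc.symm hcd hbd'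
  have hwa : vertexWeight G ℓ a = ℓ b + ℓ d + ℓ z :=
    weight_eq G ℓ hab hda.symm haz hbd' (Ne.symm hzb) (Ne.symm hzd) alla
  have hwc : vertexWeight G ℓ c = ℓ b + ℓ d + ℓ w :=
    weight_eq G ℓ hbc.symm hcd hcw hbd' (Ne.symm hwb2) (Ne.symm hwd2) allc
  have hzw : z = w := hbij.1 (add_left_cancel ((hwa.symm.trans (hμ a)).trans
    ((hμ c).symm.trans hwc)))
  subst w
  have hza : z ≠ a := (G.ne_of_adj haz).symm
  have hzc : z ≠ c := (G.ne_of_adj hcw).symm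
  -- third neighbor of x (besides b and d)
  obtain ⟨p, hxp, hpb, hpd, allx⟩ := third_neighbor G (hreg x) hbx.symm hdy.symm hbd'
  -- z ≠ x
  have hzx : z ≠ x := by
    intro h
    subst h
    have h1 := allx a haz.symm
    have h2 := allx c hcw.symm
    rcases h1 with h1 | h1 | h1
    · exact hab' h1
    · exact had' h1
    · rcases h2 with h2 | h2 | h2
      · exact hbc' h2.symm
      · exact hcd' h2
      · exact hac' (h1.trans h2.symm)
  -- p = z
  have hwx : vertexWeight G ℓ x = ℓ b + ℓ d + ℓ p :=
    weight_eq G ℓ hbx.symm hdy.symm hxp hbd' (Ne.symm hpb) (Ne.symm hpd) allx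
  have hpz : p = z := hbij.1 (add_left_cancel ((hwx.symm.trans (hμ x)).trans
    ((hμ a).symm.trans hwa)))
  subst p
  -- third neighbor of z (besides a and c)
  obtain ⟨q, hzq, hqa, hqc, allz⟩ := third_neighbor G (hreg z) haz.symm hcw.symm hac'
  have hwz : vertexWeight G ℓ z = ℓ a + ℓ c + ℓ q :=
    weight_eq G ℓ haz.symm hcw.symm hzq hac' (Ne.symm hqa) (Ne.symm hqc) allz
  have hqx : q = x := hbij.1 (add_left_cancel ((hwz.symm.trans (hμ z)).trans
    ((hμ b).symm.trans hwb)))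
  subst q
  -- the closed set S
  set S : Finset V := {a, b, c, d, x, z} with hS
  have hmemS : ∀ u : V, u ∈ S ↔ (u = a ∨ u = b ∨ u = c ∨ u = d ∨ u = x ∨ u = z) := by
    intro u; simp [hS]
  have hclosed : ∀ u ∈ S, ∀ v, G.Adj u v → v ∈ S := by
    intro u hu v huv
    rw [hmemS] at hu
    rw [hmemS]
    rcases hu with rfl | rfl | rfl | rfl | rfl | rfl
    · rcases alla v huv with h | h | h
      exacts [Or.inr (Or.inl h), Or.inr (Or.inr (Or.inr (Or.inl h))), Or.inr (Or.inr (Or.inr (Or.inr (Or.inr h))))]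
    · rcases allb v huv with h | h | h
      exacts [Or.inl h, Or.inr (Or.inr (Or.inl h)), Or.inr (Or.inr (Or.inr (Or.inr (Or.inl h))))]
    · rcases allc v huv with h | h | h
      exacts [Or.inr (Or.inl h), Or.inr (Or.inr (Or.inr (Or.inl h))), Or.inr (Or.inr (Or.inr (Or.inr (Or.inr h))))]
    · rcases alld v huv with h | h | h
      exacts [Or.inl h, Or.inr (Or.inr (Or.inl h)), Or.inr (Or.inr (Or.inr (Or.inr (Or.inl h))))]
    · rcases allx v huv with h | h | h
      exacts [Or.inr (Or.inl h), Or.inr (Or.inr (Or.inr (Or.inl h))), Or.inr (Or.inr (Or.inr (Or.inr (Or.inr h))))]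
    · rcases allz v huv with h | h | h
      exacts [Or.inl h, Or.inr (Or.inr (Or.inl h)), Or.inr (Or.inr (Or.inr (Or.inr (Or.inl h))))]
  have hwalk : ∀ (u v : V), G.Walk u v → u ∈ S → v ∈ S := by
    intro u v wk
    induction wk with
    | nil => exact id
    | cons h _ ih => exact fun hu => ih (hclosed _ hu _ h)
  have hallS : ∀ v : V, v ∈ S := by
    intro v
    obtain ⟨wk⟩ := (hconn a v)
    exact hwalk a v wk (by rw [hmemS]; tauto)
  have huniv : (Finset.univ : Finset V) = S := by
    ext u; simp [hallS u]
  have hcardS : S.card = 6 := by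
    rw [hS]
    rw [card_insert_of_notMem (by simp [hab', hac', had', Ne.symm hxa, Ne.symm hza]),
        card_insert_of_notMem (by simp [hbc', hbd', Ne.symm hxb, Ne.symm hzb]),
        card_insert_of_notMem (by simp [hcd', Ne.symm hxc, Ne.symm hzc]),
        card_insert_of_notMem (by simp [Ne.symm hxd, Ne.symm hzd]),
        card_insert_of_notMem (by simp [Ne.symm hzx]), card_singleton]
  have hcardV : Fintype.card V = 6 := by
    rw [← Finset.card_univ, huniv, hcardS]
  have h6 : Fintype.card Γ = 6 := hcard.trans hcardV
  exact sum_univ_ne_zero_of_card_six h6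
    (sum_gamma_eq_zero G hreg hcard ℓ μ hbij hμ)
end

section
/- For every n ≥ 3, the generalized Petersen graph GP(n,1) has no Γ-distance magic labeling for any Abelian group Γ of order 2n. -/
open Finset

lemma gp_one_ne_zero (n : ℕ) [NeZero n] (hn : 3 ≤ n) : (1 : ZMod n) ≠ 0 := by
  intro h
  have h2 := (ZMod.natCast_eq_zero_iff 1 n).mp (by exact_mod_cast h)
  have := Nat.le_of_dvd (by norm_num) h2
  omega

lemma gp_two_ne_zero (n : ℕ) [NeZero n] (hn : 3 ≤ n) : (2 : ZMod n) ≠ 0 := by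
  intro h
  have h2 := (ZMod.natCast_eq_zero_iff 2 n).mp (by exact_mod_cast h)
  have := Nat.le_of_dvd (by norm_num) h2
  omega

lemma adj_inl_inl (n : ℕ) [NeZero n] (hn : 3 ≤ n) (i j : ZMod n) :
    (GP n 1).Adj (Sum.inl i) (Sum.inl j) ↔ j = i + 1 ∨ j = i - 1 := by
  simp only [GP, SimpleGraph.fromRel_adj, ne_eq, Sum.inl.injEq]
  constructor
  · rintro ⟨hne, h | h⟩
    · exact Or.inl h
    · right; rw [h]; ring
  · rintro (h | h)
    · subst h
      exact ⟨fun hc => gp_one_ne_zero n hn (by linear_combination -hc), Or.inl rfl⟩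
    · subst h
      exact ⟨fun hc => gp_one_ne_zero n hn (by linear_combination hc),
        Or.inr (by ring)⟩

lemma adj_inr_inr (n : ℕ) [NeZero n] (hn : 3 ≤ n) (i j : ZMod n) :
    (GP n 1).Adj (Sum.inr i) (Sum.inr j) ↔ j = i + 1 ∨ j = i - 1 := by
  simp only [GP, SimpleGraph.fromRel_adj, ne_eq, Sum.inr.injEq, Nat.cast_one]
  constructor
  · rintro ⟨hne, h | h⟩
    · exact Or.inl h
    · right; rw [h]; ring
  · rintro (h | h)
    · subst h
      exact ⟨fun hc => gp_one_ne_zero n hn (by linear_combination -hc), Or.inl rfl⟩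
    · subst h
      exact ⟨fun hc => gp_one_ne_zero n hn (by linear_combination hc),
        Or.inr (by ring)⟩

lemma adj_inl_inr (n : ℕ) [NeZero n] (i j : ZMod n) :
    (GP n 1).Adj (Sum.inl i) (Sum.inr j) ↔ i = j := by
  simp only [GP, SimpleGraph.fromRel_adj, ne_eq]
  constructor
  · rintro ⟨-, h | h⟩
    · exact h
    · exact h.elim
  · rintro rfl
    exact ⟨Sum.inl_ne_inr, Or.inl rfl⟩

lemma adj_inr_inl (n : ℕ) [NeZero n] (i j : ZMod n) :
    (GP n 1).Adj (Sum.inr i) (Sum.inl j) ↔ j = i := by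
  simp only [GP, SimpleGraph.fromRel_adj, ne_eq]
  constructor
  · rintro ⟨-, h | h⟩
    · exact h.elim
    · exact h
  · rintro rfl
    exact ⟨Sum.inr_ne_inl, Or.inr rfl⟩

lemma weight_inl {Γ : Type*} [AddCommGroup Γ] (n : ℕ) [NeZero n] (hn : 3 ≤ n)
    (ℓ : ZMod n ⊕ ZMod n → Γ) (i : ZMod n) :
    vertexWeight (GP n 1) ℓ (Sum.inl i) =
      ℓ (Sum.inl (i + 1)) + ℓ (Sum.inl (i - 1)) + ℓ (Sum.inr i) := by
  classical
  have nb : (Finset.univ.filter (fun v => (GP n 1).Adj (Sum.inl i) v)) =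
      {Sum.inl (i + 1), Sum.inl (i - 1), Sum.inr i} := by
    ext v
    cases v with
    | inl j => simp [adj_inl_inl n hn i j]
    | inr j => simp [adj_inl_inr n i j, eq_comm]
  rw [vertexWeight.eq_def]

  rw [Finset.filter_congr_decidable, nb]
  rw [Finset.sum_insert (by
        simp only [Finset.mem_insert, Finset.mem_singleton]
        push_neg
        refine ⟨fun hc => ?_, by simp⟩
        have : i + 1 = i - 1 := Sum.inl.inj hc
        exact gp_two_ne_zero n hn (by linear_combination this)),
      Finset.sum_insert (by simp), Finset.sum_singleton, add_assoc]

lemma weight_inr {Γ : Type*} [AddCommGroup Γ] (n : ℕ) [NeZero n] (hn : 3 ≤ n)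
    (ℓ : ZMod n ⊕ ZMod n → Γ) (i : ZMod n) :
    vertexWeight (GP n 1) ℓ (Sum.inr i) =
      ℓ (Sum.inr (i + 1)) + ℓ (Sum.inr (i - 1)) + ℓ (Sum.inl i) := by
  classical
  have nb : (Finset.univ.filter (fun v => (GP n 1).Adj (Sum.inr i) v)) =
      {Sum.inr (i + 1), Sum.inr (i - 1), Sum.inl i} := by
    ext v
    cases v with
    | inl j => simp [adj_inr_inl n i j]
    | inr j => simp [adj_inr_inr n hn i j]
  rw [vertexWeight.eq_def]

  rw [Finset.filter_congr_decidable, nb]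
  rw [Finset.sum_insert (by
        simp only [Finset.mem_insert, Finset.mem_singleton]
        push_neg
        refine ⟨fun hc => ?_, by simp⟩
        have : i + 1 = i - 1 := Sum.inr.inj hc
        exact gp_two_ne_zero n hn (by linear_combination this)),
      Finset.sum_insert (by simp), Finset.sum_singleton, add_assoc]

theorem stmt5 {Γ : Type*} [AddCommGroup Γ] [Fintype Γ]
    (n : ℕ) [NeZero n] (hn : 3 ≤ n) (hcard : Fintype.card Γ = 2 * n) :
    ¬ ∃ (ℓ : ZMod n ⊕ ZMod n → Γ) (μ : Γ), IsDistMagic (GP n 1) ℓ μ := by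
  rintro ⟨ℓ, μ, hbij, hw⟩
  have e1 := hw (Sum.inl 1)
  have e2 := hw (Sum.inr 2)
  rw [weight_inl n hn ℓ 1] at e1
  rw [weight_inr n hn ℓ 2] at e2
  norm_num at e1 e2
  -- e1 : ℓ (inl 2) + ℓ (inl 0) + ℓ (inr 1) = μ
  -- e2 : ℓ (inr 3) + ℓ (inr 1) + ℓ (inl 2) = μ
  have key : ℓ (Sum.inl 0) = ℓ (Sum.inr 3) := by
    have h : ℓ (Sum.inl 0) + (ℓ (Sum.inl 2) + ℓ (Sum.inr 1)) =
        ℓ (Sum.inr 3) + (ℓ (Sum.inl 2) + ℓ (Sum.inr 1)) := by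
      rw [show ℓ (Sum.inl 0) + (ℓ (Sum.inl 2) + ℓ (Sum.inr 1)) =
          ℓ (Sum.inl 2) + ℓ (Sum.inl 0) + ℓ (Sum.inr 1) by abel, e1,
        show ℓ (Sum.inr 3) + (ℓ (Sum.inl 2) + ℓ (Sum.inr 1)) =
          ℓ (Sum.inr 3) + ℓ (Sum.inr 1) + ℓ (Sum.inl 2) by abel, e2]
    exact add_right_cancel h
  exact Sum.inl_ne_inr (hbij.injective key)
end

section
/- Let ℓ be a balanced zero-neighborhood labeling of GP(n,2). Then for every i ∈ Z_n, ℓ(x_i) + ℓ(x_{i+2}) = ℓ(x_{i-3}) + ℓ(x_{i+5}) in Z₂. -/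
open Finset

/- Auxiliary lemmas -/

lemma adjll' (n : ℕ) (h2 : (2:ZMod n) ≠ 0) (i j : ZMod n) :
    (GP n 2).Adj (Sum.inl i) (Sum.inl j) ↔ (j = i - 1 ∨ j = i + 1) := by
  simp only [GP, SimpleGraph.fromRel_adj, ne_eq, Sum.inl.injEq]
  constructor
  · rintro ⟨h, h1 | h1⟩
    · exact Or.inr h1
    · left; rw [h1]; ring
  · rintro (h1 | h1) <;> subst h1
    · refine ⟨fun h => h2 ?_, Or.inr (by ring)⟩
      have : i - (i - 1) = 0 := by rw [← h]; ring
      have h1 : (1:ZMod n) = 0 := by linear_combination this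
      linear_combination 2 * h1
    · refine ⟨fun h => h2 ?_, Or.inl rfl⟩
      have h1 : (1:ZMod n) = 0 := by linear_combination - h
      linear_combination 2 * h1

lemma adjlr' (n : ℕ) (i j : ZMod n) :
    (GP n 2).Adj (Sum.inl i) (Sum.inr j) ↔ j = i := by
  simp only [GP, SimpleGraph.fromRel_adj, ne_eq]
  constructor
  · rintro ⟨h, h1 | h1⟩
    · exact h1.symm
    · exact absurd h1 (by simp)
  · rintro rfl; exact ⟨by simp, Or.inl rfl⟩

lemma adjrr' (n : ℕ) (i j : ZMod n) :
    (GP n 2).Adj (Sum.inr i) (Sum.inr j) ↔ (j ≠ i ∧ (j = i - 2 ∨ j = i + 2)) := by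
  simp only [GP, SimpleGraph.fromRel_adj, ne_eq, Sum.inr.injEq, Nat.cast_ofNat]
  constructor
  · rintro ⟨h, h1 | h1⟩
    · exact ⟨fun hh => h hh.symm, Or.inr h1⟩
    · exact ⟨fun hh => h hh.symm, Or.inl (by rw [h1]; ring)⟩
  · rintro ⟨h, h1 | h1⟩
    · exact ⟨fun hh => h hh.symm, Or.inr (by rw [h1]; ring)⟩
    · exact ⟨fun hh => h hh.symm, Or.inl h1⟩

lemma adjrl' (n : ℕ) (i j : ZMod n) :
    (GP n 2).Adj (Sum.inr i) (Sum.inl j) ↔ j = i := by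
  rw [SimpleGraph.adj_comm, adjlr']; exact eq_comm

lemma wA (n : ℕ) [NeZero n] (h2 : (2:ZMod n) ≠ 0) (ℓ : ZMod n ⊕ ZMod n → ZMod 2) (j : ZMod n) :
    vertexWeight (GP n 2) ℓ (Sum.inl j)
      = ℓ (Sum.inl (j-1)) + ℓ (Sum.inl (j+1)) + ℓ (Sum.inr j) := by
  classical
  have hs : Finset.univ.filter (fun v => (GP n 2).Adj (Sum.inl j) v)
      = {Sum.inl (j-1), Sum.inl (j+1), Sum.inr j} := by
    ext v
    rcases v with a | a <;>
      simp [adjll' n h2, adjlr', eq_comm]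
  rw [vertexWeight, hs]
  have hne : (j:ZMod n) - 1 ≠ j + 1 := by
    intro h; apply h2; linear_combination -h
  rw [Finset.sum_insert (by simp [hne]), Finset.sum_insert (by simp),
    Finset.sum_singleton, ← add_assoc]

lemma wB (n : ℕ) [NeZero n] (h4 : (4:ZMod n) ≠ 0) (ℓ : ZMod n ⊕ ZMod n → ZMod 2) (j : ZMod n) :
    vertexWeight (GP n 2) ℓ (Sum.inr j)
      = ℓ (Sum.inr (j-2)) + ℓ (Sum.inr (j+2)) + ℓ (Sum.inl j) := by
  classical
  have h2 : (2:ZMod n) ≠ 0 := fun h => h4 (by linear_combination 2*h)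
  have hs : Finset.univ.filter (fun v => (GP n 2).Adj (Sum.inr j) v)
      = {Sum.inr (j-2), Sum.inr (j+2), Sum.inl j} := by
    ext v
    rcases v with a | a
    · simp [adjrl', eq_comm]
    · simp only [Finset.mem_filter, Finset.mem_univ, true_and, adjrr',
        Finset.mem_insert, Finset.mem_singleton, Sum.inr.injEq]
      constructor
      · rintro ⟨h, h1 | h1⟩ <;> simp [h1]
      · rintro (h1 | h1 | h1)
        · exact ⟨fun h => h2 (by rw [h1] at h; linear_combination -h), Or.inl h1⟩
        · exact ⟨fun h => h2 (by rw [h1] at h; linear_combination h), Or.inr h1⟩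
        · exact absurd h1 (by simp)
  rw [vertexWeight, hs]
  have hne : (j:ZMod n) - 2 ≠ j + 2 := by
    intro h; apply h4; linear_combination -h
  rw [Finset.sum_insert (by simp [hne]), Finset.sum_insert (by simp),
    Finset.sum_singleton, ← add_assoc]

lemma wB4 (n : ℕ) [NeZero n] (h2 : (2:ZMod n) ≠ 0) (h4 : (4:ZMod n) = 0)
    (ℓ : ZMod n ⊕ ZMod n → ZMod 2) (j : ZMod n) :
    vertexWeight (GP n 2) ℓ (Sum.inr j)
      = ℓ (Sum.inr (j+2)) + ℓ (Sum.inl j) := by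
  classical
  have heq : (j:ZMod n) - 2 = j + 2 := by linear_combination -h4
  have hs : Finset.univ.filter (fun v => (GP n 2).Adj (Sum.inr j) v)
      = {Sum.inr (j+2), Sum.inl j} := by
    ext v
    rcases v with a | a
    · simp [adjrl', eq_comm]
    · simp only [Finset.mem_filter, Finset.mem_univ, true_and, adjrr',
        Finset.mem_insert, Finset.mem_singleton, Sum.inr.injEq, heq]
      constructor
      · rintro ⟨h, h1 | h1⟩ <;> simp [h1]
      · rintro (h1 | h1)
        · exact ⟨fun h => h2 (by rw [h1] at h; linear_combination h), Or.inr h1⟩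
        · exact absurd h1 (by simp)
  rw [vertexWeight, hs]
  rw [Finset.sum_insert (by simp), Finset.sum_singleton]

lemma twox : ∀ x : ZMod 2, x + x = 0 := by decide

lemma key2' (a b c d e f g p q r s : ZMod 2)
    (h1 : a+b+p=0) (h2 : b+d+q=0) (h3 : d+f+r=0) (h4 : f+g+s=0)
    (h5 : p+r+c=0) (h6 : q+s+e=0) : c+e = a+g := by
  linear_combination h1+h2+h3+h4+h5+h6 - twox b - twox d - twox f - twox p
    - twox q - twox r - twox s - twox a - twox g

lemma key4' (b c d e q r : ZMod 2)
    (h1 : r+c=0) (h2 : q+e=0) (h3 : b+d+q=0) (h4 : d+b+r=0) : c+e = d+d := by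
  linear_combination h1+h2+h3+h4 - twox b - twox q - twox r - 2 * twox d

theorem stmt7 (n : ℕ) [NeZero n] (ℓ : ZMod n ⊕ ZMod n → ZMod 2)
    (hbzn : IsBZN (GP n 2) n ℓ) (i : ZMod n) :
    ℓ (Sum.inl i) + ℓ (Sum.inl (i + 2)) =
      ℓ (Sum.inl (i - 3)) + ℓ (Sum.inl (i + 5)) := by
  obtain ⟨-, -, hw⟩ := hbzn
  by_cases h2 : (2:ZMod n) = 0
  · rw [show i + 2 = i from by linear_combination h2,
      show i + 5 = i - 3 from by linear_combination 4*h2, twox, twox]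
  · by_cases h4 : (4:ZMod n) = 0
    · -- n = 4 case
      have e1 : i - 3 = i + 1 := by linear_combination -h4
      have e2 : i + 5 = i + 1 := by linear_combination h4
      rw [e1, e2]
      have H5 := hw (Sum.inr i)
      rw [wB4 n h2 h4] at H5
      have H6 := hw (Sum.inr (i+2))
      rw [wB4 n h2 h4, show i + 2 + 2 = i from by linear_combination h4] at H6
      have H2 := hw (Sum.inl i)
      rw [wA n h2] at H2
      have H3 := hw (Sum.inl (i+2))
      rw [wA n h2, show i + 2 - 1 = i + 1 from by ring,
        show i + 2 + 1 = i - 1 from by linear_combination h4] at H3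
      exact key4' (ℓ (Sum.inl (i-1))) (ℓ (Sum.inl i)) (ℓ (Sum.inl (i+1)))
        (ℓ (Sum.inl (i+2))) (ℓ (Sum.inr i)) (ℓ (Sum.inr (i+2))) H5 H6 H2 H3
    · -- general case
      have H1 := hw (Sum.inl (i-2))
      rw [wA n h2, show i - 2 - 1 = i - 3 from by ring,
        show i - 2 + 1 = i - 1 from by ring] at H1
      have H2 := hw (Sum.inl i)
      rw [wA n h2] at H2
      have H3 := hw (Sum.inl (i+2))
      rw [wA n h2, show i + 2 - 1 = i + 1 from by ring,
        show i + 2 + 1 = i + 3 from by ring] at H3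
      have H4 := hw (Sum.inl (i+4))
      rw [wA n h2, show i + 4 - 1 = i + 3 from by ring,
        show i + 4 + 1 = i + 5 from by ring] at H4
      have H5 := hw (Sum.inr i)
      rw [wB n h4] at H5
      have H6 := hw (Sum.inr (i+2))
      rw [wB n h4, show i + 2 - 2 = i from by ring,
        show i + 2 + 2 = i + 4 from by ring] at H6
      exact key2' (ℓ (Sum.inl (i-3))) (ℓ (Sum.inl (i-1))) (ℓ (Sum.inl i))
        (ℓ (Sum.inl (i+1))) (ℓ (Sum.inl (i+2))) (ℓ (Sum.inl (i+3)))
        (ℓ (Sum.inl (i+5))) (ℓ (Sum.inr (i-2))) (ℓ (Sum.inr i))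
        (ℓ (Sum.inr (i+2))) (ℓ (Sum.inr (i+4))) H1 H2 H3 H4 H5 H6
end

section
/- Let ℓ be a balanced zero-neighborhood labeling of GP(n,2). Then for every i ∈ Z_n and every non-negative integer t: ℓ(x_i) + ℓ(x_{i+3}) = ℓ(x_{i+5t}) + ℓ(x_{i+5t+3}) and ℓ(x_i) + ℓ(x_{i+5}) = ℓ(x_{i+3t}) + ℓ(x_{i+3t+5}) in Z₂. -/
open Finset

instance GPadjDec' (n k : ℕ) : DecidableRel (GP n k).Adj := fun a b => by
  have : Decidable ((fun a b => match a, b with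
    | Sum.inl i, Sum.inl j => j = i + 1
    | Sum.inr i, Sum.inr j => j = i + (k : ZMod n)
    | Sum.inl i, Sum.inr j => i = j
    | _, _ => False) a b) → (Decidable ((fun a b => match a, b with
    | Sum.inl i, Sum.inl j => j = i + 1
    | Sum.inr i, Sum.inr j => j = i + (k : ZMod n)
    | Sum.inl i, Sum.inr j => i = j
    | _, _ => False) b a)) → Decidable ((GP n k).Adj a b) := by
    intro d1 d2
    exact @decidable_of_iff _ _ (SimpleGraph.fromRel_adj _ a b).symm
      (@instDecidableAnd _ _ _ (@instDecidableOr _ _ d1 d2))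
  apply this <;>
  · rcases a with i | i <;> rcases b with j | j <;> dsimp only <;> infer_instance

lemma vw_eq {V : Type*} [Fintype V] (G : SimpleGraph V) [DecidableRel G.Adj]
    (ℓ : V → ZMod 2) (x : V) :
    vertexWeight G ℓ x = ∑ y ∈ Finset.univ.filter (fun u => G.Adj x u), ℓ y := by
  unfold vertexWeight
  exact Finset.sum_congr (Finset.filter_congr_decidable _ _ _) (fun _ _ => rfl)

section
variable {n : ℕ} [NeZero n]
lemma nbhd_x (h1 : (1 : ZMod n) ≠ 0) (i : ZMod n) :
    Finset.univ.filter (fun v => (GP n 2).Adj (Sum.inl i) v) =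
      {Sum.inl (i - 1), Sum.inl (i + 1), Sum.inr i} := by
  ext v
  simp only [mem_filter, mem_univ, true_and, mem_insert, mem_singleton]
  rcases v with j | j
  · rw [show (GP n 2).Adj (Sum.inl i) (Sum.inl j) ↔ (i ≠ j) ∧ (j = i + 1 ∨ i = j + 1) by
      simp [GP, SimpleGraph.fromRel_adj]]
    simp only [Sum.inl.injEq, reduceCtorEq, or_false]
    constructor
    · rintro ⟨hne, h | h⟩
      · right; exact h
      · left; rw [h]; ring
    · rintro (h | h)
      · subst h
        exact ⟨fun h => h1 (by linear_combination h), Or.inr (by ring)⟩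
      · subst h
        exact ⟨fun h => h1 (by linear_combination -h), Or.inl rfl⟩
  · rw [show (GP n 2).Adj (Sum.inl i) (Sum.inr j) ↔ i = j by
      simp [GP, SimpleGraph.fromRel_adj]]
    simp only [Sum.inr.injEq, reduceCtorEq, false_or, eq_comm]

lemma nbhd_y (h2 : (2 : ZMod n) ≠ 0) (i : ZMod n) :
    Finset.univ.filter (fun v => (GP n 2).Adj (Sum.inr i) v) =
      {Sum.inr (i - 2), Sum.inr (i + 2), Sum.inl i} := by
  ext v
  simp only [mem_filter, mem_univ, true_and, mem_insert, mem_singleton]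
  rcases v with j | j
  · rw [show (GP n 2).Adj (Sum.inr i) (Sum.inl j) ↔ i = j by
      simp [GP, SimpleGraph.fromRel_adj, eq_comm]]
    simp only [Sum.inl.injEq, reduceCtorEq, false_or, eq_comm]
  · rw [show (GP n 2).Adj (Sum.inr i) (Sum.inr j) ↔ (i ≠ j) ∧ (j = i + 2 ∨ i = j + 2) by
      simp [GP, SimpleGraph.fromRel_adj]]
    simp only [Sum.inr.injEq, reduceCtorEq, or_false]
    constructor
    · rintro ⟨hne, h | h⟩
      · right; exact h
      · left; rw [h]; ring
    · rintro (h | h)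
      · subst h
        exact ⟨fun h => h2 (by linear_combination h), Or.inr (by ring)⟩
      · subst h
        exact ⟨fun h => h2 (by linear_combination -h), Or.inl rfl⟩

lemma wx (h2 : (2 : ZMod n) ≠ 0) (ℓ : ZMod n ⊕ ZMod n → ZMod 2) (i : ZMod n) :
    vertexWeight (GP n 2) ℓ (Sum.inl i) =
      ℓ (Sum.inl (i - 1)) + ℓ (Sum.inl (i + 1)) + ℓ (Sum.inr i) := by
  have h1 : (1 : ZMod n) ≠ 0 := fun h => h2 (by linear_combination 2 * h)
  have e1 : (Sum.inl (i-1) : ZMod n ⊕ ZMod n) ∉ ({Sum.inl (i + 1), Sum.inr i} : Finset _) := by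
    simp only [mem_insert, mem_singleton, Sum.inl.injEq, reduceCtorEq, or_false]
    intro h; exact h2 (by linear_combination -h)
  have e2 : (Sum.inl (i+1) : ZMod n ⊕ ZMod n) ∉ ({Sum.inr i} : Finset (ZMod n ⊕ ZMod n)) := by simp
  rw [vw_eq, nbhd_x h1 i, Finset.sum_insert e1, Finset.sum_insert e2, Finset.sum_singleton, add_assoc]

lemma wy (h4 : (4 : ZMod n) ≠ 0) (ℓ : ZMod n ⊕ ZMod n → ZMod 2) (i : ZMod n) :
    vertexWeight (GP n 2) ℓ (Sum.inr i) =
      ℓ (Sum.inr (i - 2)) + ℓ (Sum.inr (i + 2)) + ℓ (Sum.inl i) := by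
  have h2 : (2 : ZMod n) ≠ 0 := fun h => h4 (by linear_combination 2 * h)
  have e1 : (Sum.inr (i-2) : ZMod n ⊕ ZMod n) ∉ ({Sum.inr (i + 2), Sum.inl i} : Finset _) := by
    simp only [mem_insert, mem_singleton, Sum.inr.injEq, reduceCtorEq, or_false]
    intro h; exact h4 (by linear_combination -h)
  have e2 : (Sum.inr (i+2) : ZMod n ⊕ ZMod n) ∉ ({Sum.inl i} : Finset (ZMod n ⊕ ZMod n)) := by simp
  rw [vw_eq, nbhd_y h2 i, Finset.sum_insert e1, Finset.sum_insert e2, Finset.sum_singleton, add_assoc]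
end

def BZNc (n : ℕ) [NeZero n] (ℓ : ZMod n ⊕ ZMod n → ZMod 2) : Prop :=
  (Finset.univ.filter (fun v => ℓ v = 0)).card = n ∧
  (Finset.univ.filter (fun v => ℓ v = 1)).card = n ∧
  ∀ v, (∑ y ∈ Finset.univ.filter (fun u => (GP n 2).Adj v u), ℓ y) = 0

instance (n : ℕ) [NeZero n] (ℓ : ZMod n ⊕ ZMod n → ZMod 2) : Decidable (BZNc n ℓ) := by
  unfold BZNc; infer_instance

lemma bzn_to_c (n : ℕ) [NeZero n] (ℓ : ZMod n ⊕ ZMod n → ZMod 2)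
    (h : IsBZN (GP n 2) n ℓ) : BZNc n ℓ := by
  unfold IsBZN at h
  obtain ⟨h1, h2, h3⟩ := h
  refine ⟨?_, ?_, fun v => (vw_eq _ _ _).symm.trans (h3 v)⟩ <;>
    simpa [Finset.filter_congr_decidable] using ‹_›

set_option maxRecDepth 40000 in
lemma no1 : ∀ ℓ : ZMod 1 ⊕ ZMod 1 → ZMod 2, ¬ BZNc 1 ℓ := by decide
set_option maxRecDepth 40000 in
lemma no2 : ∀ ℓ : ZMod 2 ⊕ ZMod 2 → ZMod 2, ¬ BZNc 2 ℓ := by decide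
set_option maxRecDepth 40000 in
lemma no4 : ∀ ℓ : ZMod 4 ⊕ ZMod 4 → ZMod 2, ¬ BZNc 4 ℓ := by decide

-- char-two helper lemmas in ZMod 2
lemma c3' : ∀ x y z : ZMod 2, x + y + z = 0 → z = x + y := by decide
lemma c2' : ∀ x y : ZMod 2, x + y = 0 → x = y := by decide
lemma c4' : ∀ p q r s : ZMod 2, (p + q) + (r + s) = 0 → p + r = q + s := by decide
lemma c7' : ∀ x0 x2 x3 x4 x5 x6 x8 : ZMod 2,
    x0 + x2 + x3 + x4 + x6 = 0 → x2 + x4 + x5 + x6 + x8 = 0 →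
    (x0 + x3) + (x5 + x8) = 0 := by decide

section
variable {n : ℕ} [NeZero n]

lemma keyS (h4 : (4 : ZMod n) ≠ 0) (ℓ : ZMod n ⊕ ZMod n → ZMod 2)
    (hw : ∀ v, vertexWeight (GP n 2) ℓ v = 0) (j : ZMod n) :
    (ℓ (Sum.inl j) + ℓ (Sum.inl (j + 3))) +
      (ℓ (Sum.inl (j + 5)) + ℓ (Sum.inl (j + 8))) = 0 := by
  have h2 : (2 : ZMod n) ≠ 0 := fun h => h4 (by linear_combination 2 * h)
  have hb : ∀ m : ZMod n, ℓ (Sum.inr m) = ℓ (Sum.inl (m - 1)) + ℓ (Sum.inl (m + 1)) := by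
    intro m
    have h := hw (Sum.inl m)
    rw [wx h2] at h
    exact c3' _ _ _ h
  have R : ∀ m : ZMod n, ℓ (Sum.inl m) + ℓ (Sum.inl (m + 2)) + ℓ (Sum.inl (m + 3)) +
      ℓ (Sum.inl (m + 4)) + ℓ (Sum.inl (m + 6)) = 0 := by
    intro m
    have h := hw (Sum.inr (m + 3))
    rw [wy h4] at h
    rw [show m + 3 - 2 = m + 1 from by ring, show m + 3 + 2 = m + 5 from by ring,
      hb (m + 1), hb (m + 5),
      show m + 1 - 1 = m from by ring, show m + 1 + 1 = m + 2 from by ring,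
      show m + 5 - 1 = m + 4 from by ring, show m + 5 + 1 = m + 6 from by ring] at h
    linear_combination h
  have hA := R j
  have hB := R (j + 2)
  rw [show j + 2 + 2 = j + 4 from by ring, show j + 2 + 3 = j + 5 from by ring,
    show j + 2 + 4 = j + 6 from by ring, show j + 2 + 6 = j + 8 from by ring] at hB
  exact c7' _ _ _ _ _ _ _ hA hB
end

theorem stmt8 (n : ℕ) [NeZero n] (ℓ : ZMod n ⊕ ZMod n → ZMod 2)
    (hbzn : IsBZN (GP n 2) n ℓ) (i : ZMod n) (t : ℕ) :
    ℓ (Sum.inl i) + ℓ (Sum.inl (i + 3)) =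
      ℓ (Sum.inl (i + 5 * (t : ZMod n))) + ℓ (Sum.inl (i + 5 * (t : ZMod n) + 3)) ∧
    ℓ (Sum.inl i) + ℓ (Sum.inl (i + 5)) =
      ℓ (Sum.inl (i + 3 * (t : ZMod n))) + ℓ (Sum.inl (i + 3 * (t : ZMod n) + 5)) := by
  by_cases h4 : (4 : ZMod n) = 0
  · -- degenerate: n ∣ 4, hypothesis is contradictory
    exfalso
    have hdvd : n ∣ 4 := by
      have : ((4 : ℕ) : ZMod n) = 0 := by exact_mod_cast h4
      exact (ZMod.natCast_eq_zero_iff 4 n).mp this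
    have hpos : 0 < n := Nat.pos_of_ne_zero (NeZero.ne n)
    have hle : n ≤ 4 := Nat.le_of_dvd (by norm_num) hdvd
    have hcase : n = 1 ∨ n = 2 ∨ n = 3 ∨ n = 4 := by omega
    rcases hcase with rfl | rfl | rfl | rfl
    · exact no1 ℓ (bzn_to_c 1 ℓ hbzn)
    · exact no2 ℓ (bzn_to_c 2 ℓ hbzn)
    · norm_num at hdvd
    · exact no4 ℓ (bzn_to_c 4 ℓ hbzn)
  · obtain ⟨-, -, hw⟩ := hbzn
    have S := keyS h4 ℓ hw
    constructor
    · induction t with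
      | zero => simp
      | succ t ih =>
        rw [show ((t + 1 : ℕ) : ZMod n) = (t : ZMod n) + 1 from by push_cast; ring,
          show i + 5 * ((t : ZMod n) + 1) = i + 5 * (t : ZMod n) + 5 from by ring,
          show i + 5 * (t : ZMod n) + 5 + 3 = i + 5 * (t : ZMod n) + 8 from by ring]
        exact ih.trans (c2' _ _ (S (i + 5 * (t : ZMod n))))
    · induction t with
      | zero => simp
      | succ t ih =>
        rw [show ((t + 1 : ℕ) : ZMod n) = (t : ZMod n) + 1 from by push_cast; ring,
          show i + 3 * ((t : ZMod n) + 1) = i + 3 * (t : ZMod n) + 3 from by ring,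
          show i + 3 * (t : ZMod n) + 3 + 5 = i + 3 * (t : ZMod n) + 8 from by ring]
        exact ih.trans (c4' _ _ _ _ (S (i + 3 * (t : ZMod n))))
end

section
/- Let ℓ be a balanced zero-neighborhood labeling of a cubic graph G on 2n vertices. Then the number of vertices of G having exactly one neighbor labeled 0 equals 3n/2; in particular n is even. -/
open Finset

attribute [local instance] Classical.propDecidable

theorem stmt11 {V : Type*} [Fintype V] [DecidableEq V]
    (G : SimpleGraph V) (hreg : ∀ v, degOf G v = 3)
    (n : ℕ) (hcard : Fintype.card V = 2 * n)
    (ℓ : V → ZMod 2) (hbzn : IsBZN G n ℓ) :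
    2 * (Finset.univ.filter (fun v : V =>
        (Finset.univ.filter (fun u => G.Adj v u ∧ ℓ u = 0)).card = 1)).card = 3 * n ∧
    Even n := by
  classical
  obtain ⟨h0, h1, hw⟩ := hbzn
  have hz : ∀ a : ZMod 2, a ≠ 1 → a = 0 := by decide
  have hz' : ∀ a : ZMod 2, a ≠ 0 → a = 1 := by decide
  set c : V → ℕ := fun v => (Finset.univ.filter (fun u => G.Adj v u ∧ ℓ u = 0)).card with hc
  have key : ∀ v, c v = 1 ∨ c v = 3 := by
    intro v
    set N : Finset V := Finset.univ.filter (fun u => G.Adj v u) with hN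
    have hcv : c v = (N.filter (fun u => ℓ u = 0)).card := by
      simp [hc, hN, Finset.filter_filter]
    have hsplit : (N.filter (fun u => ℓ u = 0)).card
        + (N.filter (fun u => ¬ ℓ u = 0)).card = 3 := by
      rw [Finset.card_filter_add_card_filter_not]
      have := hreg v
      rw [degOf] at this
      exact this
    -- the number of neighbors labeled 1 is even
    have hwv := hw v
    rw [vertexWeight] at hwv
    have hsum : (∑ y ∈ N, ℓ y) = ((N.filter (fun u => ¬ ℓ u = 0)).card : ZMod 2) := by
      rw [← Finset.sum_filter_add_sum_filter_not N (fun u => ¬ ℓ u = 0)]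
      have e1 : (∑ y ∈ N.filter (fun u => ¬ ℓ u = 0), ℓ y)
          = ((N.filter (fun u => ¬ ℓ u = 0)).card : ZMod 2) := by
        rw [Finset.sum_congr rfl (fun y hy => ?_), Finset.sum_const, nsmul_eq_mul, mul_one]
        exact hz' _ (Finset.mem_filter.mp hy).2
      have e2 : (∑ y ∈ N.filter (fun u => ¬ ¬ ℓ u = 0), ℓ y) = 0 := by
        apply Finset.sum_eq_zero
        intro y hy
        have := (Finset.mem_filter.mp hy).2
        simpa using this
      rw [e1, e2, add_zero]
    rw [hsum] at hwv
    have heven : 2 ∣ (N.filter (fun u => ¬ ℓ u = 0)).card :=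
      (ZMod.natCast_eq_zero_iff _ 2).mp hwv
    rw [hcv]
    omega
  -- double counting
  have hsum : (∑ v, c v) = 3 * n := by
    have step1 : (∑ v, c v) = ∑ v : V, ∑ u : V, (if G.Adj v u ∧ ℓ u = 0 then 1 else 0) := by
      apply Finset.sum_congr rfl
      intro v _
      exact Finset.card_filter _ _
    rw [step1, Finset.sum_comm]
    have step2 : ∀ u : V, (∑ v : V, (if G.Adj v u ∧ ℓ u = 0 then 1 else 0))
        = if ℓ u = 0 then 3 else 0 := by
      intro u
      by_cases h : ℓ u = 0
      · simp only [h, and_true, if_true]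
        have : (∑ v : V, (if G.Adj v u then 1 else 0))
            = (Finset.univ.filter (fun v => G.Adj v u)).card := by
          rw [Finset.card_filter]
        rw [this]
        have : (Finset.univ.filter (fun v => G.Adj v u))
            = (Finset.univ.filter (fun v => G.Adj u v)) := by
          apply Finset.filter_congr
          intro v _
          constructor
          · exact fun h => h.symm
          · exact fun h => h.symm
        rw [this]
        have := hreg u
        rw [degOf] at this
        exact this
      · simp [h]
    rw [Finset.sum_congr rfl (fun u _ => step2 u), Finset.sum_ite, Finset.sum_const,
      Finset.sum_const, smul_eq_mul, smul_eq_mul, mul_zero, add_zero, h0, mul_comm]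
  -- split the sum according to c v = 1 or c v = 3
  set A : Finset V := Finset.univ.filter (fun v => c v = 1) with hA
  have hsplit2 : (∑ v, c v) = A.card + 3 * (Finset.univ.filter (fun v => ¬ c v = 1)).card := by
    rw [← Finset.sum_filter_add_sum_filter_not Finset.univ (fun v => c v = 1)]
    congr 1
    · rw [Finset.sum_congr rfl (fun v hv => (Finset.mem_filter.mp hv).2), Finset.sum_const,
        smul_eq_mul, mul_one]
    · rw [Finset.sum_congr rfl (fun v hv => ?_), Finset.sum_const, smul_eq_mul, mul_comm]
      rcases key v with h | h
      · exact absurd h (Finset.mem_filter.mp hv).2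
      · exact h
  have hpart : A.card + (Finset.univ.filter (fun v => ¬ c v = 1)).card = 2 * n := by
    rw [hA, Finset.card_filter_add_card_filter_not, Finset.card_univ, hcard]
  refine ⟨by omega, ?_⟩
  have h2A : 2 * A.card = 3 * n := by omega
  obtain ⟨k, hk⟩ : 2 ∣ n := by omega
  exact ⟨k, by omega⟩
end

section
/- For every n ≥ 3, the generalized Petersen graph GP(n,2) has no balanced zero-neighborhood labeling. -/
open Finset

/-! Write `a i`, `b i` for the labels of `x_i`, `y_i`. The zero-sum conditions at `x_i` and `y_i`
say `b i = a (i + 1) + a (i - 1)` and, for `n ≠ 4`, `a i = b (i + 2) + b (i - 2)`. Hence `a`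
satisfies a linear recurrence over `𝔽₂` with characteristic polynomial
`x^6 + x^4 + x^3 + x^2 + 1 = Φ₃ Φ₅`, a divisor of `x^15 - 1`, so the labeling is periodic with
period `d = gcd n 15` and descends to `ZMod d`. There each of `a`, `b` is a sum of two shifts of
the other, so one period carries an even number of ones; but a balanced labeling has `n = (n/d) d`
ones, i.e. exactly `d` per period, and `d` is odd. For `n = 4` the inner vertices form a perfect
matching and the relations force the zero labeling. -/

open Function

section
variable {V Γ : Type*} [Fintype V] [AddCommMonoid Γ]

lemma vertexWeight_eq_sum {G : SimpleGraph V} {ℓ : V → Γ} {x : V} (s : Finset V)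
    (hs : ∀ y, G.Adj x y ↔ y ∈ s) : vertexWeight G ℓ x = ∑ y ∈ s, ℓ y := by
  classical
  unfold vertexWeight
  congr 1
  ext y
  simp [hs]

end

lemma ne_and_eq_add_or_eq_add_iff {R : Type*} [Ring R] {c i j : R} (hc : c ≠ 0) :
    i ≠ j ∧ (j = i + c ∨ i = j + c) ↔ j = i + c ∨ j = i - c := by
  constructor
  · rintro ⟨-, rfl | rfl⟩
    · exact .inl rfl
    · exact .inr (by abel)
  · rintro (rfl | rfl)
    · exact ⟨fun h => hc (by simpa using h.symm), .inl rfl⟩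
    · exact ⟨fun h => hc (by simpa using h.symm), .inr (by abel)⟩

section
variable {n : ℕ} {k : ℕ}

@[simp] lemma GP_adj_inl_inl {i j : ZMod n} :
    (GP n k).Adj (.inl i) (.inl j) ↔ i ≠ j ∧ (j = i + 1 ∨ i = j + 1) := by
  simp [GP]

@[simp] lemma GP_adj_inr_inr {i j : ZMod n} :
    (GP n k).Adj (.inr i) (.inr j) ↔ i ≠ j ∧ (j = i + k ∨ i = j + k) := by
  simp [GP]

@[simp] lemma GP_adj_inl_inr {i j : ZMod n} : (GP n k).Adj (.inl i) (.inr j) ↔ i = j := by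
  simp [GP]

@[simp] lemma GP_adj_inr_inl {i j : ZMod n} : (GP n k).Adj (.inr i) (.inl j) ↔ i = j := by
  simp [GP, eq_comm]

variable [NeZero n] {Γ : Type*} [AddCommMonoid Γ] (ℓ : ZMod n ⊕ ZMod n → Γ) (i : ZMod n)

lemma vertexWeight_GP_inl (h2 : (2 : ZMod n) ≠ 0) :
    vertexWeight (GP n k) ℓ (.inl i) = ℓ (.inl (i + 1)) + ℓ (.inl (i - 1)) + ℓ (.inr i) := by
  classical
  have h1 : (1 : ZMod n) ≠ 0 := fun h => h2 (by linear_combination 2 * h)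
  rw [vertexWeight_eq_sum {.inl (i + 1), .inl (i - 1), .inr i}, Finset.sum_insert,
    Finset.sum_pair, add_assoc]
  · simp
  · simpa using fun h => h2 (by linear_combination h)
  · rintro (j | j)
    · simp [ne_and_eq_add_or_eq_add_iff h1]
    · simp [eq_comm]

lemma vertexWeight_GP_inr (h2k : (2 * k : ZMod n) ≠ 0) :
    vertexWeight (GP n k) ℓ (.inr i) = ℓ (.inr (i + k)) + ℓ (.inr (i - k)) + ℓ (.inl i) := by
  classical
  have hk : (k : ZMod n) ≠ 0 := fun h => h2k (by rw [h, mul_zero])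
  rw [vertexWeight_eq_sum {.inr (i + k), .inr (i - k), .inl i}, Finset.sum_insert,
    Finset.sum_pair, add_assoc]
  · simp
  · simpa using fun h => h2k (by linear_combination h)
  · rintro (j | j)
    · simp [eq_comm]
    · simp [ne_and_eq_add_or_eq_add_iff hk]

lemma vertexWeight_GP_inr_of_two_mul_eq_zero (hk : (k : ZMod n) ≠ 0)
    (h2k : (2 * k : ZMod n) = 0) :
    vertexWeight (GP n k) ℓ (.inr i) = ℓ (.inr (i + k)) + ℓ (.inl i) := by
  classical
  have hsub : i - k = i + k := by linear_combination -h2k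
  rw [vertexWeight_eq_sum {.inr (i + k), .inl i}, Finset.sum_pair (by simp)]
  rintro (j | j)
  · simp [eq_comm]
  · simp [ne_and_eq_add_or_eq_add_iff hk, hsub]

end

lemma Function.Periodic.natCast_gcd {α : Type*} {n m : ℕ} {f : ZMod n → α}
    (hf : Periodic f (m : ZMod n)) : Periodic f (n.gcd m : ZMod n) := by
  have hbez : ((n.gcd m : ℕ) : ZMod n) = (n.gcdB m : ZMod n) * m := by
    have := congrArg (Int.cast : ℤ → ZMod n) (Nat.gcd_eq_gcd_ab n m)
    push_cast [ZMod.natCast_self] at this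
    rw [this]
    ring
  rw [hbez]
  exact hf.int_mul _

lemma Function.Periodic.exists_eq_comp_castHom {α : Type*} {n d : ℕ} [NeZero n] (hd : d ∣ n)
    {f : ZMod n → α} (hf : Periodic f (d : ZMod n)) :
    ∃ g : ZMod d → α, f = g ∘ ZMod.castHom hd (ZMod d) := by
  have hπ := ZMod.castHom_surjective hd
  suffices h : ∀ x y, ZMod.castHom hd (ZMod d) x = ZMod.castHom hd (ZMod d) y → f x = f y from
    ⟨f ∘ surjInv hπ, funext fun i => h _ _ (surjInv_eq hπ _).symm⟩
  intro x y hxy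
  obtain ⟨k, hk⟩ : d ∣ (x - y).val := by
    rw [← ZMod.natCast_eq_zero_iff, ← ZMod.cast_eq_val, ← ZMod.castHom_apply (h := hd),
      map_sub, hxy, sub_self]
  calc f x = f (y + k * d) := by
        rw [mul_comm, ← Nat.cast_mul, ← hk, ZMod.natCast_zmod_val, add_sub_cancel]
    _ = f y := hf.nat_mul k y

lemma sum_comp_of_surjective {G H M F : Type*} [AddGroup G] [Fintype G] [AddGroup H] [Fintype H]
    [DecidableEq H] [AddCommMonoid M] [FunLike F G H] [AddMonoidHomClass F G H]
    (φ : F) (hφ : Surjective φ) (f : H → M) :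
    ∑ g, f (φ g) = #{g | φ g = 0} • ∑ h, f h := by
  rw [Finset.sum_comp, Finset.image_univ_of_surjective hφ, Finset.smul_sum]
  refine Finset.sum_congr rfl fun h _ => ?_
  rw [AddMonoidHom.card_fiber_eq_of_mem_range φ (hφ h) (hφ 0)]

lemma ZMod.sum_comp_castHom {n d : ℕ} [NeZero n] [NeZero d] {M : Type*} [AddCommMonoid M]
    (hd : d ∣ n) (f : ZMod d → M) :
    ∑ i, f (ZMod.castHom hd (ZMod d) i) = (n / d) • ∑ j, f j := by
  classical
  have hπ := ZMod.castHom_surjective hd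
  have hcard := sum_comp_of_surjective _ hπ (fun _ => 1)
  simp only [Finset.sum_const, Finset.card_univ, ZMod.card, smul_eq_mul, mul_one] at hcard
  rw [sum_comp_of_surjective _ hπ, Nat.div_eq_of_eq_mul_left (Nat.pos_of_neZero d) hcard]

lemma sum_add_sub_eq_zero {G : Type*} [AddGroup G] [Fintype G] (f : G → ZMod 2) (c : G) :
    ∑ j, (f (j + c) + f (j - c)) = 0 := by
  rw [Finset.sum_add_distrib, Fintype.sum_equiv (Equiv.addRight c) (fun j => f (j + c)) f
    (fun _ => rfl), Fintype.sum_equiv (Equiv.subRight c) (fun j => f (j - c)) f (fun _ => rfl),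
    CharTwo.add_self_eq_zero]

section
variable {n : ℕ} {a b : ZMod n → ZMod 2}

lemma recurrence_of_neighbor_relations (hb : ∀ i, b i = a (i + 1) + a (i - 1))
    (ha : ∀ i, a i = b (i + 2) + b (i - 2)) (i : ZMod n) :
    a (i + 6) = a (i + 4) + a (i + 3) + a (i + 2) + a i := by
  have h3 := ha (i + 3)
  have h5 := hb (i + 5)
  have h1 := hb (i + 1)
  ring_nf at h3 h5 h1 ⊢
  linear_combination (norm := ring_nf) h3 + h5 + h1
  reduce_mod_char

/-- The characteristic polynomial `x^6 + x^4 + x^3 + x^2 + 1 = Φ₃ Φ₅` of the recurrence divides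
`x^15 - 1` over `𝔽₂`, with cofactor `1 + x^2 + x^3 + x^6 + x^7 + x^9`. -/
lemma periodic_fifteen_of_recurrence
    (h : ∀ i, a (i + 6) = a (i + 4) + a (i + 3) + a (i + 2) + a i) : Periodic a 15 := by
  intro i
  linear_combination (norm := ring_nf)
    h i + h (i + 2) + h (i + 3) + h (i + 6) + h (i + 7) + h (i + 9)
  reduce_mod_char

lemma sum_val_ne_of_neighbor_relations [NeZero n] (hb : ∀ i, b i = a (i + 1) + a (i - 1))
    (ha : ∀ i, a i = b (i + 2) + b (i - 2)) : ∑ i, ((a i).val + (b i).val) ≠ n := by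
  set d := n.gcd 15
  have hd : d ∣ n := Nat.gcd_dvd_left n 15
  have : NeZero d := ⟨Nat.gcd_ne_zero_right (by norm_num)⟩
  have hper : Periodic a (15 : ℕ) := by
    exact_mod_cast periodic_fifteen_of_recurrence (recurrence_of_neighbor_relations hb ha)
  obtain ⟨a', rfl⟩ := hper.natCast_gcd.exists_eq_comp_castHom hd
  have hπ := ZMod.castHom_surjective hd
  set π := ZMod.castHom hd (ZMod d)
  set b' : ZMod d → ZMod 2 := fun j => a' (j + 1) + a' (j - 1)
  have hb' : b = b' ∘ π := funext fun i => by simp [hb, b']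
  subst hb'
  have ha' : ∀ j, a' j = b' (j + 2) + b' (j - 2) := by
    intro j
    obtain ⟨i, rfl⟩ := hπ j
    simpa [map_ofNat] using ha i
  have hpar : ((∑ j, ((a' j).val + (b' j).val) : ℕ) : ZMod 2) = 0 := by
    push_cast [ZMod.natCast_zmod_val]
    rw [Finset.sum_add_distrib, Finset.sum_congr rfl fun j _ => ha' j, sum_add_sub_eq_zero,
      sum_add_sub_eq_zero, add_zero]
  intro hcount
  have hW : ∑ j, ((a' j).val + (b' j).val) = d := by
    have hsum := ZMod.sum_comp_castHom hd fun j => (a' j).val + (b' j).val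
    refine Nat.eq_of_mul_eq_mul_left (Nat.div_pos (Nat.le_of_dvd (Nat.pos_of_neZero n) hd)
      (Nat.pos_of_neZero d)) ?_
    rw [← smul_eq_mul, ← hsum, Nat.div_mul_cancel hd]
    exact hcount
  rw [hW, ZMod.natCast_eq_zero_iff] at hpar
  exact absurd (hpar.trans (Nat.gcd_dvd_right n 15)) (by norm_num)

end

lemma sum_val_ne_four_of_neighbor_relations {a b : ZMod 4 → ZMod 2}
    (hb : ∀ i, b i = a (i + 1) + a (i - 1)) (ha : ∀ i, a i = b (i + 2)) :
    ∑ i, ((a i).val + (b i).val) ≠ 4 := by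
  have ha0 : a = 0 := by
    have key : ∀ a : ZMod 4 → ZMod 2, (∀ i, a i = a (i + 3) + a (i + 1)) → a = 0 := by decide
    refine key a fun i => ?_
    rw [ha, hb]
    ring_nf
  have hb0 : b = 0 := funext fun i => by simp [hb, ha0]
  simp [ha0, hb0]

lemma card_filter_eq_one_eq_sum_val {V : Type*} [Fintype V] (ℓ : V → ZMod 2)
    [DecidablePred fun v => ℓ v = 1] : #{v | ℓ v = 1} = ∑ v, (ℓ v).val := by
  have key : ∀ x : ZMod 2, (if x = 1 then 1 else 0) = x.val := by decide
  rw [Finset.card_filter]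
  exact Finset.sum_congr rfl fun v _ => by convert key (ℓ v)

theorem stmt12 (n : ℕ) [NeZero n] (hn : 3 ≤ n) :
    ¬ ∃ ℓ : ZMod n ⊕ ZMod n → ZMod 2, IsBZN (GP n 2) n ℓ := by
  rintro ⟨ℓ, -, hones, hzero⟩
  rw [card_filter_eq_one_eq_sum_val, Fintype.sum_sum_type, ← Finset.sum_add_distrib] at hones
  have h2 : (2 : ZMod n) ≠ 0 := by
    exact_mod_cast (ZMod.natCast_eq_zero_iff 2 n).not.mpr (Nat.not_dvd_of_pos_of_lt two_pos hn)
  have hb (i : ZMod n) : ℓ (.inr i) = ℓ (.inl (i + 1)) + ℓ (.inl (i - 1)) :=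
    (CharTwo.add_eq_zero.mp (vertexWeight_GP_inl ℓ i h2 ▸ hzero (.inl i))).symm
  rcases eq_or_ne n 4 with rfl | hn4
  · have ha (i : ZMod 4) : ℓ (.inl i) = ℓ (.inr (i + 2)) := by
      have := vertexWeight_GP_inr_of_two_mul_eq_zero (k := 2) ℓ i (by decide) (by decide)
      simpa using (CharTwo.add_eq_zero.mp (this ▸ hzero (.inr i))).symm
    exact sum_val_ne_four_of_neighbor_relations hb ha hones
  · have h4 : (2 * (2 : ℕ) : ZMod n) ≠ 0 := by
      have : ¬ n ∣ 4 := fun h => by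
        have := Nat.le_of_dvd four_pos h
        interval_cases n <;> simp_all
      exact_mod_cast (ZMod.natCast_eq_zero_iff 4 n).not.mpr this
    have ha (i : ZMod n) : ℓ (.inl i) = ℓ (.inr (i + 2)) + ℓ (.inr (i - 2)) := by
      simpa using (CharTwo.add_eq_zero.mp (vertexWeight_GP_inr ℓ i h4 ▸ hzero (.inr i))).symm
    exact sum_val_ne_of_neighbor_relations hb ha hones
end

section
/- Let G be a graph on 2n vertices and Γ an Abelian group of order n. Suppose ℓ is a (Z₂ ⊕ Γ)-distance magic labeling of G whose magic constant has the form (0, g) for some g ∈ Γ. Then the first-coordinate projection ℓ₁ : V(G) → Z₂ of ℓ is a balanced zero-neighborhood labeling of G. -/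
open Finset

theorem stmt13 {V Γ : Type*} [Fintype V] [AddCommGroup Γ] [Fintype Γ]
    (G : SimpleGraph V) (n : ℕ) (hV : Fintype.card V = 2 * n)
    (hΓ : Fintype.card Γ = n)
    (ℓ : V → ZMod 2 × Γ) (g : Γ) (hmagic : IsDistMagic G ℓ ((0 : ZMod 2), g)) :
    IsBZN G n (fun v => (ℓ v).1) := by
  classical
  obtain ⟨hbij, hmag⟩ := hmagic
  have key : ∀ c : ZMod 2,
      (Finset.univ.filter (fun v => (ℓ v).1 = c)).card = n := by
    intro c
    have h1 : (Finset.univ.filter (fun v => (ℓ v).1 = c)).card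
        = (Finset.univ.filter (fun p : ZMod 2 × Γ => p.1 = c)).card := by
      apply Finset.card_bij (fun v _ => ℓ v)
      · intro a ha; simpa using (Finset.mem_filter.mp ha).2
      · intro a _ b _ h; exact hbij.1 h
      · intro b hb
        obtain ⟨a, ha⟩ := hbij.2 b
        exact ⟨a, by simp [ha, (Finset.mem_filter.mp hb).2], ha⟩
    have h2 : (Finset.univ.filter (fun p : ZMod 2 × Γ => p.1 = c))
        = {c} ×ˢ Finset.univ := by
      ext p; simp [Prod.ext_iff, eq_comm]
    rw [h1, h2, Finset.card_product]
    simp [hΓ]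
  refine ⟨key 0, key 1, ?_⟩
  intro v
  have := hmag v
  have : (vertexWeight G ℓ v).1 = (0 : ZMod 2) := by rw [this]
  rw [← this]
  unfold vertexWeight
  simp [Prod.fst_sum]
end

section
/- Let A and B be finite Abelian groups with |B| = r, and let G be an r-regular graph admitting an A-distance magic labeling. Then the disjoint union rG of r copies of G admits an (A ⊕ B)-distance magic labeling, with magic constant (μ', 0) where μ' is the magic constant for G. -/
/- The labeling (i, v) ↦ (ℓ' v, e i), for a bijection e : Fin r ≃ B, is bijective. Inside each copy
the first coordinate of the weight is the weight of ℓ' in G, i.e. μ', and the second is a sum of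
r = |B| equal elements of B, which vanishes because |B| annihilates B. -/

open Finset

/-- `copies t G` : the disjoint union of `t` copies of `G`. -/
def copies {V : Type*} (t : ℕ) (G : SimpleGraph V) : SimpleGraph (Fin t × V) where
  Adj a b := a.1 = b.1 ∧ G.Adj a.2 b.2
  symm := ⟨fun a b h => ⟨h.1.symm, h.2.symm⟩⟩
  loopless := ⟨fun a h => G.loopless.irrefl a.2 h.2⟩

section Weights

variable {V Γ : Type*} [Fintype V] [AddCommMonoid Γ]

theorem vertexWeight_copies (t : ℕ) (G : SimpleGraph V) (ℓ : Fin t × V → Γ) (i : Fin t) (v : V) :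
    vertexWeight (copies t G) ℓ (i, v) = vertexWeight G (fun u => ℓ (i, u)) v := by
  classical
  have hnbhd : univ.filter (fun p => (copies t G).Adj (i, v) p) =
      {i} ×ˢ univ.filter (fun u => G.Adj v u) := by
    ext ⟨j, u⟩
    simp only [mem_filter, mem_univ, true_and, mem_product, mem_singleton]
    exact and_congr_left' eq_comm
  simp only [vertexWeight, hnbhd, sum_product, sum_singleton]

theorem vertexWeight_const (G : SimpleGraph V) (c : Γ) (v : V) :
    vertexWeight G (fun _ => c) v = degOf G v • c := by
  classical
  simp only [vertexWeight, degOf, sum_const]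

theorem vertexWeight_prodMk {Γ' : Type*} [AddCommMonoid Γ'] (G : SimpleGraph V) (f : V → Γ)
    (g : V → Γ') (v : V) :
    vertexWeight G (fun u => (f u, g u)) v = (vertexWeight G f v, vertexWeight G g v) := by
  classical
  simp only [vertexWeight, Prod.ext_iff, Prod.fst_sum, Prod.snd_sum, and_self]

end Weights

theorem IsDistMagic.prod_copies {V A B : Type*} [Fintype V] [AddCommMonoid A] [AddCommGroup B]
    [Fintype B] {G : SimpleGraph V} {ℓ : V → A} {μ : A} (h : IsDistMagic G ℓ μ) {t : ℕ}
    (hreg : ∀ v, degOf G v = t) (e : Fin t ≃ B) :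
    IsDistMagic (copies t G) (fun p => (ℓ p.2, e p.1)) (μ, 0) := by
  refine ⟨((Equiv.prodComm _ _).trans ((Equiv.ofBijective ℓ h.1).prodCongr e)).bijective,
    fun ⟨i, v⟩ => ?_⟩
  have hcard : t = Fintype.card B := by simpa using Fintype.card_congr e
  simp only [vertexWeight_copies, vertexWeight_prodMk, vertexWeight_const, h.2, hreg, hcard,
    card_nsmul_eq_zero]

theorem stmt19_general {V A B : Type*} [Fintype V] [AddCommGroup A]
    [AddCommGroup B] [Fintype B]
    (G : SimpleGraph V) (r : ℕ) (hB : Fintype.card B = r)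
    (hreg : ∀ v, degOf G v = r)
    (ℓ' : V → A) (μ' : A) (hmagic : IsDistMagic G ℓ' μ') :
    ∃ ℓ : Fin r × V → A × B, IsDistMagic (copies r G) ℓ (μ', (0 : B)) :=
  ⟨_, hmagic.prod_copies hreg (Fintype.equivFinOfCardEq hB).symm⟩

theorem stmt19 {V A B : Type*} [Fintype V] [AddCommGroup A] [Fintype A]
    [AddCommGroup B] [Fintype B]
    (G : SimpleGraph V) (r : ℕ) (hB : Fintype.card B = r)
    (hreg : ∀ v, degOf G v = r)
    (hA : Fintype.card A = Fintype.card V)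
    (ℓ' : V → A) (μ' : A) (hmagic : IsDistMagic G ℓ' μ') :
    ∃ ℓ : Fin r × V → A × B, IsDistMagic (copies r G) ℓ (μ', (0 : B)) :=
  stmt19_general G r hB hreg ℓ' μ' hmagic
end
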